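/- Let V be a finite set and let X, Y, X′, Y′ be subsets of V that cover V and are pairwise disjoint except for X ∩ X′ = {s}. Let A be the symmetric integer matrix indexed by V which agrees with the F-matrix F[X,Y] on entries with both indices in X ∪ Y, agrees with the F-matrix F[X′,Y′] on entries with both indices in X′ ∪ Y′, and is 0 on all entries with one index in (X ∪ Y) ∖ {s} and the other in (X′ ∪ Y′) ∖ {s}. Then for every r ∈ X ∖ {s}, the matrix T_{s,r}A is the matrix built in exactly the same way from the four sets X ∖ {r}, Y, X′, Y′ ∪ {r}. -/

import Mathlib

open Matrix

/-- `M_{s,r}^σ = I + σ·e_s·e_rᵀ`. -/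
def Msr {V : Type*} [Fintype V] [DecidableEq V] (σ : ℤ) (s r : V) : Matrix V V ℤ :=
  1 + Matrix.single s r σ

/-- `T_{s,r} A = (M_{s,r}^{-A_{s,r}})ᵀ · A · M_{s,r}^{-A_{s,r}}`. -/
def Tsr {V : Type*} [Fintype V] [DecidableEq V] (s r : V) (A : Matrix V V ℤ) : Matrix V V ℤ :=
  (Msr (-(A s r)) s r)ᵀ * A * Msr (-(A s r)) s r

/-- The matrix indexed by `V` that agrees with the F-matrix `F[X,Y]` on entries with both
indices in `X ∪ Y`, agrees with the F-matrix `F[X',Y']` on entries with both indices in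
`X' ∪ Y'`, and is `0` on all remaining (mixed) off-diagonal entries.  (Recall that the
F-matrix `F[X,Y]` has diagonal entries `2`, entry `+1` between two distinct vertices in the
same part, and entry `-1` between two vertices in different parts.) -/
def glueF {V : Type*} [DecidableEq V] (X Y X' Y' : Finset V) : Matrix V V ℤ :=
  fun i j =>
    if i = j then 2
    else if i ∈ X ∪ Y ∧ j ∈ X ∪ Y then (if (i ∈ X ↔ j ∈ X) then 1 else -1)
    else if i ∈ X' ∪ Y' ∧ j ∈ X' ∪ Y' then (if (i ∈ X' ↔ j ∈ X') then 1 else -1)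
    else 0

/-!
Since `A s r = 1`, the transvection `T_{s,r}` subtracts row `s` of `A` from row `r` and
column `s` from column `r`, and leaves every other entry alone; away from `r` the two
glued matrices agree anyway.  The vertex `s` lies in both `X` and `X'`, so row `s` of `A` is the
`F[X,Y]` row of `r` on `X ∪ Y` and the `F[X',Y']` row of a vertex of `X'` on `X' ∪ Y'`.
Subtracting it from row `r` therefore cancels the `X ∪ Y` part and leaves on `X' ∪ Y'` exactly
the row of a vertex of `Y'`.
-/

section Transvection

variable {V : Type*} [Fintype V] [DecidableEq V]

lemma transpose_Msr_mul_apply (σ : ℤ) (s r : V) (B : Matrix V V ℤ) (i j : V) :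
    ((Msr σ s r)ᵀ * B) i j = B i j + if i = r then σ * B s j else 0 := by
  rw [Msr, transpose_add, transpose_one, transpose_single, add_mul, one_mul, Matrix.add_apply]
  split_ifs with hi
  · rw [hi, single_mul_apply_same]
  · rw [single_mul_apply_of_ne (h := hi), add_zero]

lemma mul_Msr_apply (σ : ℤ) (s r : V) (B : Matrix V V ℤ) (i j : V) :
    (B * Msr σ s r) i j = B i j + if j = r then B i s * σ else 0 := by
  rw [Msr, mul_add, mul_one, Matrix.add_apply]
  split_ifs with hj
  · rw [hj, mul_single_apply_same]
  · rw [mul_single_apply_of_ne (hbj := hj), add_zero]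

lemma Tsr_apply_of_ne {s r i j : V} (A : Matrix V V ℤ) (hi : i ≠ r) (hj : j ≠ r) :
    Tsr s r A i j = A i j := by
  simp [Tsr, transpose_Msr_mul_apply, mul_Msr_apply, hi, hj]

lemma Tsr_apply_left_of_ne {s r j : V} (A : Matrix V V ℤ) (hj : j ≠ r) :
    Tsr s r A r j = A r j - A s r * A s j := by
  simp only [Tsr, mul_Msr_apply, transpose_Msr_mul_apply, ↓reduceIte, neg_mul, hj, add_zero]
  ring

lemma Tsr_apply_self (s r : V) (A : Matrix V V ℤ) :
    Tsr s r A r r = A r r - A s r * (A r s + A s r) + A s r ^ 2 * A s s := by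
  simp only [Tsr, mul_Msr_apply, transpose_Msr_mul_apply, ↓reduceIte, neg_mul, mul_neg]
  ring

lemma isSymm_Tsr {A : Matrix V V ℤ} (hA : A.IsSymm) (s r : V) : (Tsr s r A).IsSymm := by
  rw [IsSymm, Tsr, transpose_mul, transpose_mul, transpose_transpose, hA.eq, Matrix.mul_assoc]

end Transvection

section GlueF

variable {V : Type*} [DecidableEq V] {X Y X' Y' : Finset V} {s r : V}

lemma isSymm_glueF (X Y X' Y' : Finset V) : (glueF X Y X' Y').IsSymm :=
  IsSymm.ext fun i j => by simp only [glueF, eq_comm, and_comm, iff_comm]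

lemma glueF_erase_insert_apply_of_ne {i j : V} (hi : i ≠ r) (hj : j ≠ r) :
    glueF (X.erase r) Y X' (insert r Y') i j = glueF X Y X' Y' i j := by
  simp [glueF, hi, hj]

lemma notMem_union_of_mem_union_of_ne (hXX' : X ∩ X' = {s}) (hXY' : X ∩ Y' = ∅)
    (hYX' : Y ∩ X' = ∅) (hYY' : Y ∩ Y' = ∅) {j : V} (hj : j ∈ X ∪ Y) (hjs : j ≠ s) :
    j ∉ X' ∪ Y' := by
  intro hj'
  rw [Finset.mem_union] at hj hj'
  rcases hj with hj | hj <;> rcases hj' with hj' | hj'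
  · exact hjs (Finset.mem_singleton.mp (hXX' ▸ Finset.mem_inter_of_mem hj hj'))
  all_goals simp_all [← Finset.disjoint_iff_inter_eq_empty, Finset.disjoint_left]

variable [Fintype V] in
lemma Tsr_glueF_apply_left (hXX' : X ∩ X' = {s}) (hXY : X ∩ Y = ∅) (hXY' : X ∩ Y' = ∅)
    (hYX' : Y ∩ X' = ∅) (hYY' : Y ∩ Y' = ∅) (hr : r ∈ X) (hrs : r ≠ s) (j : V) :
    Tsr s r (glueF X Y X' Y') r j = glueF (X.erase r) Y X' (insert r Y') r j := by
  have hs : s ∈ X ∧ s ∈ X' := Finset.mem_inter.mp (hXX' ▸ Finset.mem_singleton_self s)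
  have hrY : r ∉ Y := fun h => by simpa [hXY] using Finset.mem_inter_of_mem hr h
  have hrY' : r ∉ Y' := fun h => by simpa [hXY'] using Finset.mem_inter_of_mem hr h
  have hsY : s ∉ Y := fun h => by simpa [hXY] using Finset.mem_inter_of_mem hs.1 h
  have hrX' : r ∉ X' := fun h => hrs (by simpa [hXX'] using Finset.mem_inter_of_mem hr h)
  have hsr : glueF X Y X' Y' s r = 1 := by simp [glueF, hrs.symm, hr, hs.1]
  rcases eq_or_ne j r with hjr | hjr
  · subst j
    rw [Tsr_apply_self, (isSymm_glueF X Y X' Y').apply s r, hsr]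
    simp [glueF]
  rw [Tsr_apply_left_of_ne _ hjr, hsr, one_mul]
  rcases eq_or_ne j s with rfl | hjs
  · simp [glueF, hrs, hr, hs, hrY, hrY', hrX', hsY]
  by_cases hj : j ∈ X ∪ Y
  · have hj' := notMem_union_of_mem_union_of_ne hXX' hXY' hYX' hYY' hj hjs
    simp [glueF, hr, hrY, hrY', hrX', hs.1, hjr, hjr.symm, hjs.symm, hj, hj']
  · simp [glueF, hr, hrY, hrY', hrX', hs, hjr, hjr.symm, hjs.symm, hj]
    split_ifs <;> rfl

end GlueF

theorem stmt9_general (V : Type*) [Fintype V] [DecidableEq V]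
    (X Y X' Y' : Finset V) (s : V)
    (hXX' : X ∩ X' = {s})
    (hXY : X ∩ Y = ∅) (hXY' : X ∩ Y' = ∅)
    (hYX' : Y ∩ X' = ∅) (hYY' : Y ∩ Y' = ∅)
    (r : V) (hr : r ∈ X) (hrs : r ≠ s) :
    Tsr s r (glueF X Y X' Y') = glueF (X.erase r) Y X' (insert r Y') := by
  have row_r := Tsr_glueF_apply_left hXX' hXY hXY' hYX' hYY' hr hrs
  ext i j
  rcases eq_or_ne i r with hi | hi
  · exact hi ▸ row_r j
  rcases eq_or_ne j r with hj | hj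
  · subst j
    rw [(isSymm_Tsr (isSymm_glueF X Y X' Y') s r).apply r i,
      (isSymm_glueF (X.erase r) Y X' (insert r Y')).apply r i, row_r]
  · rw [Tsr_apply_of_ne _ hi hj, glueF_erase_insert_apply_of_ne hi hj]

theorem stmt9 (V : Type*) [Fintype V] [DecidableEq V]
    (X Y X' Y' : Finset V) (s : V)
    (hcov : X ∪ Y ∪ X' ∪ Y' = Finset.univ)
    (hXX' : X ∩ X' = {s})
    (hXY : X ∩ Y = ∅) (hXY' : X ∩ Y' = ∅)
    (hYX' : Y ∩ X' = ∅) (hYY' : Y ∩ Y' = ∅) (hX'Y' : X' ∩ Y' = ∅)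
    (r : V) (hr : r ∈ X) (hrs : r ≠ s) :
    Tsr s r (glueF X Y X' Y') = glueF (X.erase r) Y X' (insert r Y') :=
  stmt9_general V X Y X' Y' s hXX' hXY hXY' hYX' hYY' r hr hrs
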